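/- Let (M,g) be a complete Riemannian manifold, Q : M → ℝ smooth, and α > 0. Suppose there exists a smooth positive function u on M with -αΔu + Qu = 0. Then for every compactly supported smooth function φ on M, ∫_M α|∇φ|² + Qφ² ≥ 0. -/

import Mathlib

open MeasureTheory

/-- Fischer-Colbrie–Schoen, one direction. If `-αΔu + Qu = 0` admits a
smooth positive solution `u`, then the quadratic form `∫ α|∇φ|² + Qφ²` is nonnegative
on compactly supported smooth functions.  (Stated on Euclidean space, where the
Laplacian `Δu = ∑ᵢ ∂ᵢ∂ᵢ u` and the gradient are available in Mathlib.) -/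
theorem stmt5 {n : ℕ}
    (α : ℝ) (hα : 0 < α)
    (Q u : EuclideanSpace ℝ (Fin n) → ℝ)
    (hQ : ContDiff ℝ (⊤ : ℕ∞) Q)
    (hu : ContDiff ℝ (⊤ : ℕ∞) u) (hupos : ∀ x, 0 < u x)
    (heq : ∀ x, -α * (∑ i : Fin n,
        fderiv ℝ (fun y => fderiv ℝ u y (EuclideanSpace.single i 1)) x
          (EuclideanSpace.single i 1)) + Q x * u x = 0) :
    ∀ φ : EuclideanSpace ℝ (Fin n) → ℝ, ContDiff ℝ (⊤ : ℕ∞) φ → HasCompactSupport φ →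
      0 ≤ ∫ x, (α * ‖gradient φ x‖ ^ 2 + Q x * φ x ^ 2) := by
  classical
  intro φ hφ hφc
  let e : Fin n → EuclideanSpace ℝ (Fin n) := fun i => EuclideanSpace.single i 1
  have hune : ∀ x, u x ≠ 0 := fun x => (hupos x).ne'
  have hu1 : ContDiff ℝ 1 u := hu.of_le (by simp)
  have hu2 : ContDiff ℝ 2 u := hu.of_le (by exact WithTop.coe_le_coe.mpr le_top)
  have hφ1 : ContDiff ℝ 1 φ := hφ.of_le (by simp)
  have hud : Differentiable ℝ u := hu1.differentiable one_ne_zero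
  have hφd : Differentiable ℝ φ := hφ1.differentiable one_ne_zero
  -- the test function v = φ² / u, written as (φ*φ) * u⁻¹
  set v : EuclideanSpace ℝ (Fin n) → ℝ := fun x => (φ x * φ x) * (u x)⁻¹ with hv_def
  have hv1 : ContDiff ℝ 1 v := (hφ1.mul hφ1).mul (hu1.inv hune)
  have hvd : Differentiable ℝ v := hv1.differentiable one_ne_zero
  have hvc : HasCompactSupport v := by
    have hveq : v = φ * fun x => φ x * (u x)⁻¹ := by
      funext x; simp [hv_def, mul_assoc]
    rw [hveq]; exact hφc.mul_right
  -- second partial derivatives of u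
  set D : Fin n → EuclideanSpace ℝ (Fin n) → ℝ :=
    fun i x => fderiv ℝ (fun y => fderiv ℝ u y (e i)) x (e i) with hD_def
  have hg : ∀ i, ContDiff ℝ 1 (fun y => fderiv ℝ u y (e i)) := fun i =>
    (ContinuousLinearMap.apply ℝ ℝ (e i)).contDiff.comp
      (hu2.fderiv_right (by norm_num))
  -- derivative of v
  have hdv : ∀ (x : EuclideanSpace ℝ (Fin n)) (w : EuclideanSpace ℝ (Fin n)), fderiv ℝ v x w =
      2 * φ x * fderiv ℝ φ x w / u x
        - φ x ^ 2 * fderiv ℝ u x w / u x ^ 2 := by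
    intro x w
    have h1 : HasFDerivAt (fun y => (u y)⁻¹)
        ((-(u x ^ 2)⁻¹) • fderiv ℝ u x) x :=
      (hasDerivAt_inv (hune x)).comp_hasFDerivAt x (hud x).hasFDerivAt
    have h2 : HasFDerivAt (fun y => φ y * φ y)
        (φ x • fderiv ℝ φ x + φ x • fderiv ℝ φ x) x :=
      (hφd x).hasFDerivAt.mul (hφd x).hasFDerivAt
    have h3 : HasFDerivAt v
        ((φ x * φ x) • ((-(u x ^ 2)⁻¹) • fderiv ℝ u x)
          + (u x)⁻¹ • (φ x • fderiv ℝ φ x + φ x • fderiv ℝ φ x)) x := h2.mul h1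
    rw [h3.fderiv]
    simp only [ContinuousLinearMap.add_apply, ContinuousLinearMap.smul_apply,
      smul_eq_mul]
    field_simp
    ring
  -- continuity of the various derivative functions
  have cdu : ∀ i, Continuous fun x => fderiv ℝ u x (e i) := fun i =>
    (hg i).continuous
  have cdφ : ∀ i, Continuous fun x => fderiv ℝ φ x (e i) := fun i =>
    (ContinuousLinearMap.apply ℝ ℝ (e i)).continuous.comp
      (hφ1.continuous_fderiv one_ne_zero)
  have cdv : ∀ i, Continuous fun x => fderiv ℝ v x (e i) := fun i =>
    (ContinuousLinearMap.apply ℝ ℝ (e i)).continuous.comp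
      (hv1.continuous_fderiv one_ne_zero)
  have cD : ∀ i, Continuous fun x => D i x := fun i =>
    (ContinuousLinearMap.apply ℝ ℝ (e i)).continuous.comp
      ((hg i).continuous_fderiv one_ne_zero)
  -- integrability helpers
  have hintvD : ∀ i, Integrable (fun x => v x * D i x) :=
    fun i => ((hv1.continuous).mul (cD i)).integrable_of_hasCompactSupport
      (hvc.mul_right)
  have hintdvdu : ∀ i, Integrable (fun x => fderiv ℝ v x (e i) * fderiv ℝ u x (e i)) :=
    fun i => ((cdv i).mul (cdu i)).integrable_of_hasCompactSupport
      ((hvc.fderiv_apply ℝ (e i)).mul_right)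
  have hintvdu : ∀ i, Integrable (fun x => v x * fderiv ℝ u x (e i)) :=
    fun i => ((hv1.continuous).mul (cdu i)).integrable_of_hasCompactSupport
      (hvc.mul_right)
  have hintdφ : ∀ i, Integrable (fun x => fderiv ℝ φ x (e i) ^ 2) := by
    intro i
    have : HasCompactSupport fun x => fderiv ℝ φ x (e i) := hφc.fderiv_apply ℝ (e i)
    exact ((cdφ i).pow 2).integrable_of_hasCompactSupport (by
      simpa [sq] using this.mul_right (f' := fun x => fderiv ℝ φ x (e i)))
  -- integration by parts
  have ibp : ∀ i, ∫ x, v x * D i x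
      = - ∫ x, fderiv ℝ v x (e i) * fderiv ℝ u x (e i) := by
    intro i
    exact integral_mul_fderiv_eq_neg_fderiv_mul_of_integrable
      (hintdvdu i) (hintvD i) (hintvdu i) (fun x _ => hvd x) (fun x _ => (hg i).differentiable one_ne_zero x)
  -- pointwise: the norm of the gradient in coordinates
  have hgrad : ∀ x : EuclideanSpace ℝ (Fin n), ‖gradient φ x‖ ^ 2 = ∑ i, fderiv ℝ φ x (e i) ^ 2 := by
    intro x
    have h1 : ∀ i, gradient φ x i = fderiv ℝ φ x (e i) := by
      intro i
      have h := InnerProductSpace.toDual_symm_apply (𝕜 := ℝ) (E := EuclideanSpace ℝ (Fin n))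
        (y := fderiv ℝ φ x) (x := e i)
      have h2 : gradient φ x = (InnerProductSpace.toDual ℝ (EuclideanSpace ℝ (Fin n))).symm (fderiv ℝ φ x) := rfl
      rw [← h2] at h
      rw [EuclideanSpace.inner_single_right] at h
      simpa [e] using h
    rw [EuclideanSpace.norm_eq, Real.sq_sqrt (by positivity)]
    simp [h1, Real.norm_eq_abs, sq_abs]
  -- pointwise: the zero-order term
  have hQφ : ∀ x : EuclideanSpace ℝ (Fin n), Q x * φ x ^ 2 = ∑ i, α * (v x * D i x) := by
    intro x
    have h := heq x
    have hsum : α * ∑ i, D i x = Q x * u x := by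
      simp only [hD_def, e] at *
      linarith
    calc Q x * φ x ^ 2 = (Q x * u x) * v x := by
          simp only [hv_def]; field_simp [hune x]
      _ = (α * ∑ i, D i x) * v x := by rw [hsum]
      _ = ∑ i, α * (v x * D i x) := by
          rw [Finset.mul_sum, Finset.sum_mul]
          exact Finset.sum_congr rfl fun i _ => by ring
  -- main computation
  have key : ∫ x, (α * ‖gradient φ x‖ ^ 2 + Q x * φ x ^ 2)
      = ∑ i, ∫ x, α * (fderiv ℝ φ x (e i) - φ x * fderiv ℝ u x (e i) / u x) ^ 2 := by
    have h1 : (fun x => α * ‖gradient φ x‖ ^ 2 + Q x * φ x ^ 2)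
        = fun x => ∑ i, (α * fderiv ℝ φ x (e i) ^ 2 + α * (v x * D i x)) := by
      funext x
      rw [hgrad x, hQφ x, Finset.mul_sum, ← Finset.sum_add_distrib]
    rw [h1, integral_finset_sum (μ := volume) Finset.univ
      (f := fun i x => α * fderiv ℝ φ x (e i) ^ 2 + α * (v x * D i x))
      (fun i _ => ((hintdφ i).const_mul α).add ((hintvD i).const_mul α))]
    congr 1
    funext i
    rw [integral_add ((hintdφ i).const_mul α) ((hintvD i).const_mul α),
      integral_const_mul, integral_const_mul, ibp i, mul_neg, ← sub_eq_add_neg,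
      ← mul_sub, ← integral_sub (hintdφ i) (hintdvdu i), ← integral_const_mul]
    apply integral_congr_ae
    filter_upwards with x
    rw [hdv x (e i)]
    have h2 := hune x
    field_simp
    ring
  rw [key]
  apply Finset.sum_nonneg
  intro i _
  apply integral_nonneg
  intro x
  positivity
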